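/- Let n ≤ m. For every integer k with m ≤ k ≤ mn, there exists a density operator ρ on C^n ⊗ C^m with rank ρ = k, tr_B ρ = (1/n) I_n, and tr_A ρ = (1/m) I_m. -/

import Mathlib

/-!
For `n ≤ m` the Weyl states `ψ_{ij} = (I ⊗ X^i Z^j) ψ₀₀` (`i < m`, `j < n`) form an orthonormal
basis of `ℂ^n ⊗ ℂ^m`: `ψ_{ij}` is supported on the pairs `(a, a + i)` with phases `ω^{ja}`, so
distinct shifts have disjoint supports and distinct phases are orthogonal characters of `ℤ/n`.
Each `ψ_{ij}` has `tr_B = I/n`, while `tr_A ψ_{ij}` is `1/n` times the projection onto the `n`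
vectors `|a + i⟩`. Hence a mixture `∑ w_{ij} |ψ_{ij}⟩⟨ψ_{ij}|` with `w ≥ 0` and
`∑_j w_{ij} = 1/m` for every `i` has both marginals maximally mixed, and its rank is the number of
nonzero weights. Writing `k = r_0 + ⋯ + r_{m-1}` with `1 ≤ r_i ≤ n`, take `w_{ij} = 1/(m r_i)` for
`j < r_i`.
-/

open ComplexOrder

/-- `ω = e^{2πi/n}`, a primitive `n`-th root of unity. -/
noncomputable def omegaC (n : ℕ) : ℂ := Complex.exp (2 * Real.pi * Complex.I / n)

/-- The cyclic shift operator `X` on `ℂ^m`: `X |j⟩ = |j + 1 mod m⟩`. -/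
def shiftX (m : ℕ) [NeZero m] : Matrix (Fin m) (Fin m) ℂ :=
  fun i j => if i = j + 1 then 1 else 0

/-- The generalized clock operator `Z_n` on `ℂ^m`: `Z_n |i⟩ = ω^i |i⟩` with `ω = e^{2πi/n}`. -/
noncomputable def weylZ (n m : ℕ) : Matrix (Fin m) (Fin m) ℂ :=
  Matrix.diagonal fun i : Fin m => omegaC n ^ (i : ℕ)

/-- The maximally entangled state `|ψ₀₀⟩ = (1/√n) ∑_{s<n} |s⟩ ⊗ |s⟩` in `ℂ^n ⊗ ℂ^m`. -/
noncomputable def psi00 (n m : ℕ) : Fin n × Fin m → ℂ :=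
  fun p => if (p.1 : ℕ) = (p.2 : ℕ) then ((Real.sqrt n : ℝ)⁻¹ : ℂ) else 0

/-- Apply an operator `M` on `ℂ^m` to the second tensor factor of `ℂ^n ⊗ ℂ^m`. -/
noncomputable def applyB {n m : ℕ} (M : Matrix (Fin m) (Fin m) ℂ)
    (v : Fin n × Fin m → ℂ) : Fin n × Fin m → ℂ :=
  fun p => ∑ c : Fin m, M p.2 c * v (p.1, c)

/-- `|ψ_{ij}⟩ = (I_n ⊗ X^i Z_n^j) |ψ₀₀⟩`. -/
noncomputable def psiV (n m : ℕ) [NeZero m] (i : Fin m) (j : Fin n) :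
    Fin n × Fin m → ℂ :=
  applyB (shiftX m ^ (i : ℕ) * weylZ n m ^ (j : ℕ)) (psi00 n m)

/-- The rank-one projector `|v⟩⟨v|`. -/
noncomputable def proj {α : Type*} (v : α → ℂ) : Matrix α α ℂ :=
  fun p q => v p * star (v q)

/-- Partial trace over the second tensor factor. -/
noncomputable def trB {n m : ℕ} (ρ : Matrix (Fin n × Fin m) (Fin n × Fin m) ℂ) :
    Matrix (Fin n) (Fin n) ℂ :=
  fun a a' => ∑ b : Fin m, ρ (a, b) (a', b)

/-- Partial trace over the first tensor factor. -/
noncomputable def trA {n m : ℕ} (ρ : Matrix (Fin n × Fin m) (Fin n × Fin m) ℂ) :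
    Matrix (Fin m) (Fin m) ℂ :=
  fun b b' => ∑ a : Fin n, ρ (a, b) (a, b')

open Matrix Finset

section Mixture

variable {ι : Type*} [Fintype ι] [DecidableEq ι]

lemma trace_mul_diagonal_mul_conjTranspose {U : Matrix ι ι ℂ} (hU : Uᴴ * U = 1) (d : ι → ℂ) :
    (U * diagonal d * Uᴴ).trace = ∑ q, d q := by
  rw [trace_mul_cycle, hU, one_mul, trace_diagonal]

lemma rank_mul_diagonal_mul_conjTranspose {U : Matrix ι ι ℂ} (hU : Uᴴ * U = 1) (d : ι → ℂ) :
    (U * diagonal d * Uᴴ).rank = Fintype.card {q // d q ≠ 0} := by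
  rw [rank_mul_eq_left_of_isUnit_det _ _ (isUnit_det_of_right_inverse hU),
    rank_mul_eq_right_of_isUnit_det _ _ (isUnit_det_of_left_inverse hU), rank_diagonal]

lemma mul_diagonal_mul_conjTranspose_apply (U : Matrix ι ι ℂ) (d : ι → ℂ) (p p' : ι) :
    (U * diagonal d * Uᴴ) p p' = ∑ q, d q * proj (fun p => U p q) p p' := by
  rw [mul_apply]
  exact sum_congr rfl fun q _ => by simp only [mul_diagonal, conjTranspose_apply, proj]; ring

variable {n m : ℕ}

lemma trB_mul_diagonal_mul_conjTranspose (U : Matrix (Fin n × Fin m) (Fin n × Fin m) ℂ)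
    (d : Fin n × Fin m → ℂ) :
    trB (U * diagonal d * Uᴴ) = ∑ q, d q • trB (proj fun p => U p q) := by
  ext a a'
  simp only [trB, mul_diagonal_mul_conjTranspose_apply, Matrix.sum_apply, Matrix.smul_apply,
    smul_eq_mul, mul_sum]
  exact sum_comm

lemma trA_mul_diagonal_mul_conjTranspose (U : Matrix (Fin n × Fin m) (Fin n × Fin m) ℂ)
    (d : Fin n × Fin m → ℂ) :
    trA (U * diagonal d * Uᴴ) = ∑ q, d q • trA (proj fun p => U p q) := by
  ext b b'
  simp only [trA, mul_diagonal_mul_conjTranspose_apply, Matrix.sum_apply, Matrix.smul_apply,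
    smul_eq_mul, mul_sum]
  exact sum_comm

end Mixture

section RootsOfUnity

variable {n : ℕ}

lemma omegaC_ne_zero (n : ℕ) : omegaC n ≠ 0 := Complex.exp_ne_zero _

lemma star_omegaC (n : ℕ) : star (omegaC n) = (omegaC n)⁻¹ := by
  rw [omegaC, Complex.star_def, ← Complex.exp_conj, ← Complex.exp_neg]
  congr 1
  simp [map_div₀, map_ofNat]
  ring

lemma sum_star_omegaC_pow_mul_pow [NeZero n] (j j' : Fin n) :
    ∑ a : Fin n, star (omegaC n ^ ((j : ℕ) * a)) * omegaC n ^ ((j' : ℕ) * a)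
      = if j = j' then (n : ℂ) else 0 := by
  have hω := Complex.isPrimitiveRoot_exp n (NeZero.ne n)
  set ζ := (omegaC n ^ (j : ℕ))⁻¹ * omegaC n ^ (j' : ℕ)
  have hterm (a : ℕ) : star (omegaC n ^ ((j : ℕ) * a)) * omegaC n ^ ((j' : ℕ) * a) = ζ ^ a := by
    rw [star_pow, star_omegaC]
    simp only [ζ, mul_pow, inv_pow, ← pow_mul]
  simp only [hterm]
  rw [Fin.sum_univ_eq_sum_range (ζ ^ ·)]
  split_ifs with hjj
  · simp [ζ, hjj, omegaC_ne_zero]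
  · have hζ : ζ ≠ 1 := by
      intro h
      rw [inv_mul_eq_one₀ (pow_ne_zero _ (omegaC_ne_zero n))] at h
      exact hjj (Fin.ext (hω.pow_inj j.isLt j'.isLt h))
    have hζn : ζ ^ n = 1 := by
      have hωn : omegaC n ^ n = 1 := hω.pow_eq_one
      rw [mul_pow, inv_pow, ← pow_mul, ← pow_mul, mul_comm (j : ℕ), mul_comm (j' : ℕ), pow_mul,
        pow_mul, hωn, one_pow, one_pow, inv_one, one_mul]
    rw [geom_sum_eq hζ, hζn, sub_self, zero_div]

lemma star_omegaC_pow_mul_inv_sqrt_mul (t t' : ℕ) :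
    star (omegaC n ^ t * ((Real.sqrt n)⁻¹ : ℝ)) * (omegaC n ^ t' * ((Real.sqrt n)⁻¹ : ℝ))
      = star (omegaC n ^ t) * omegaC n ^ t' * (n : ℂ)⁻¹ := by
  have hs : (((Real.sqrt n)⁻¹ : ℝ) : ℂ) * ((Real.sqrt n)⁻¹ : ℝ) = (n : ℂ)⁻¹ := by
    rw [← Complex.ofReal_mul, ← mul_inv, Real.mul_self_sqrt n.cast_nonneg]
    push_cast; rfl
  rw [star_mul, Complex.star_def, Complex.conj_ofReal, ← hs]
  ring

lemma omegaC_pow_mul_inv_sqrt_mul_star (t : ℕ) :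
    omegaC n ^ t * ((Real.sqrt n)⁻¹ : ℝ) * star (omegaC n ^ t * ((Real.sqrt n)⁻¹ : ℝ))
      = (n : ℂ)⁻¹ := by
  rw [mul_comm, star_omegaC_pow_mul_inv_sqrt_mul, star_pow, star_omegaC, inv_pow,
    inv_mul_cancel₀ (pow_ne_zero _ (omegaC_ne_zero n)), one_mul]

end RootsOfUnity

open Fin.NatCast in
lemma shiftX_pow_apply (m : ℕ) [NeZero m] (i : ℕ) (b c : Fin m) :
    (shiftX m ^ i) b c = if b = c + i then 1 else 0 := by
  induction i generalizing c with
  | zero => simp [one_apply]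
  | succ i ih =>
    rw [pow_succ, mul_apply, sum_eq_single (c + 1)]
    · simp [shiftX, ih, Nat.cast_succ, add_assoc, add_comm (1 : Fin m)]
    · intro x _ hx
      simp [shiftX, hx]
    · simp

section Weyl

variable {n m : ℕ} [NeZero m]

lemma psiV_apply (hnm : n ≤ m) (i : Fin m) (j : Fin n) (a : Fin n) (b : Fin m) :
    psiV n m i j (a, b) = if b = Fin.castLE hnm a + i then
      omegaC n ^ ((j : ℕ) * a) * ((Real.sqrt n)⁻¹ : ℝ) else 0 := by
  rw [psiV, applyB, sum_eq_single (Fin.castLE hnm a)]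
  · simp [psi00, weylZ, shiftX_pow_apply, diagonal_pow, ← pow_mul, mul_comm]
  · intro c _ hc
    have : (a : ℕ) ≠ c := fun h => hc (Fin.ext h.symm)
    simp [psi00, this]
  · simp

variable (n m) in
noncomputable def weylBasis : Matrix (Fin n × Fin m) (Fin n × Fin m) ℂ :=
  fun p q => psiV n m q.2 q.1 p

lemma conjTranspose_weylBasis_mul_self [NeZero n] (hnm : n ≤ m) :
    (weylBasis n m)ᴴ * weylBasis n m = 1 := by
  ext ⟨j, i⟩ ⟨j', i'⟩
  simp only [mul_apply, conjTranspose_apply, weylBasis, Fintype.sum_prod_type, psiV_apply hnm,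
    apply_ite star, star_zero, mul_ite, mul_zero, sum_ite_eq', mem_univ, if_true, add_right_inj]
  rcases eq_or_ne i i' with rfl | hi
  · simp only [if_true, star_omegaC_pow_mul_inv_sqrt_mul, ← sum_mul, sum_star_omegaC_pow_mul_pow]
    by_cases hj : j = j' <;> simp [hj, one_apply, NeZero.ne]
  · simp [hi, hi.symm, one_apply]

lemma trB_proj_psiV (hnm : n ≤ m) (i : Fin m) (j : Fin n) :
    trB (proj (psiV n m i j)) = (n : ℂ)⁻¹ • 1 := by
  ext a a'
  simp only [trB, proj, psiV_apply hnm, apply_ite star, star_zero, mul_ite, ite_mul, mul_zero,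
    zero_mul, sum_ite_eq', mem_univ, if_true, add_left_inj, Fin.castLE_inj]
  rcases eq_or_ne a' a with rfl | ha
  · simp only [if_true, omegaC_pow_mul_inv_sqrt_mul_star]
    simp
  · simp [ha, ha.symm, one_apply]

lemma trA_proj_psiV (hnm : n ≤ m) (i : Fin m) (j : Fin n) :
    trA (proj (psiV n m i j)) =
      (n : ℂ)⁻¹ • diagonal fun b => (#{a : Fin n | b = Fin.castLE hnm a + i} : ℂ) := by
  ext b b'
  simp only [trA, proj, psiV_apply hnm, apply_ite star, star_zero, mul_ite, ite_mul, mul_zero,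
    zero_mul, ← ite_and]
  rcases eq_or_ne b b' with rfl | hb
  · simp only [and_self, omegaC_pow_mul_inv_sqrt_mul_star]
    simp [sum_ite, mul_comm]
  · rw [sum_eq_zero fun a _ => if_neg fun h => hb (h.2.trans h.1.symm)]
    simp [hb]

lemma sum_card_castLE_add_eq (hnm : n ≤ m) (b : Fin m) :
    ∑ i : Fin m, #{a : Fin n | b = Fin.castLE hnm a + i} = n := by
  simp only [card_filter]
  rw [sum_comm]
  have hone (a : Fin n) : ∑ i : Fin m, (if b = Fin.castLE hnm a + i then 1 else 0) = 1 := by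
    simp [eq_comm (a := b), ← eq_sub_iff_add_eq']
  simp [hone]

variable (n m) in
noncomputable def weylMixture (w : Fin n × Fin m → ℂ) : Matrix (Fin n × Fin m) (Fin n × Fin m) ℂ :=
  weylBasis n m * diagonal w * (weylBasis n m)ᴴ

lemma trB_weylMixture (hnm : n ≤ m) (w : Fin n × Fin m → ℂ) :
    trB (weylMixture n m w) = (∑ q, w q) • (n : ℂ)⁻¹ • 1 := by
  rw [weylMixture, trB_mul_diagonal_mul_conjTranspose, sum_smul]
  simp only [weylBasis, trB_proj_psiV hnm]

lemma trA_weylMixture [NeZero n] (hnm : n ≤ m) {w : Fin n × Fin m → ℂ}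
    (hw : ∀ i, ∑ j, w (j, i) = (m : ℂ)⁻¹) :
    trA (weylMixture n m w) = (m : ℂ)⁻¹ • 1 := by
  rw [weylMixture, trA_mul_diagonal_mul_conjTranspose, Fintype.sum_prod_type_right]
  simp only [weylBasis, trA_proj_psiV hnm, ← sum_smul, hw]
  rw [← smul_sum, ← smul_sum]
  congr 1
  ext b b'
  rcases eq_or_ne b b' with rfl | hb
  · simp only [Matrix.sum_apply, Matrix.smul_apply, diagonal_apply_eq, one_apply_eq, smul_eq_mul,
      ← Nat.cast_sum, sum_card_castLE_add_eq hnm]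
    exact inv_mul_cancel₀ (NeZero.ne _)
  · simp [Matrix.sum_apply, hb]

end Weyl

lemma exists_fin_sum_eq_of_le_of_le_mul {m n k : ℕ} (hk₁ : m ≤ k) (hk₂ : k ≤ m * n) :
    ∃ r : Fin m → ℕ, (∀ i, 0 < r i ∧ r i ≤ n) ∧ ∑ i, r i = k := by
  have hdiv := Nat.div_add_mod k m
  refine ⟨fun i => k / m + if (i : ℕ) < k % m then 1 else 0, fun i => ?_, ?_⟩
  · have hq : 0 < k / m := Nat.div_pos hk₁ i.pos
    dsimp only
    split_ifs with hi
    · have : k / m < n := by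
        by_contra! h
        nlinarith [Nat.mul_le_mul_left m h]
      omega
    · exact ⟨by omega, Nat.div_le_of_le_mul hk₂⟩
  · have hmod : k % m ≤ m := by
      rcases Nat.eq_zero_or_pos m with rfl | hm
      · simp_all
      · exact (Nat.mod_lt k hm).le
    rw [sum_add_distrib, sum_const, card_univ, Fintype.card_fin, sum_boole, Fin.card_filter_val_lt,
      min_eq_right hmod, smul_eq_mul, Nat.cast_id, hdiv]

lemma exists_nonneg_weights_card_support_eq {m n k : ℕ} (hk₁ : m ≤ k) (hk₂ : k ≤ m * n) :
    ∃ w : Fin n × Fin m → ℂ, (∀ q, 0 ≤ w q) ∧ (∀ i, ∑ j, w (j, i) = (m : ℂ)⁻¹) ∧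
      Fintype.card {q // w q ≠ 0} = k := by
  obtain ⟨r, hr, hsum⟩ := exists_fin_sum_eq_of_le_of_le_mul hk₁ hk₂
  have hcard (i : Fin m) : #{j : Fin n | (j : ℕ) < r i} = r i := by
    rw [Fin.card_filter_val_lt, min_eq_right (hr i).2]
  refine ⟨fun q => if (q.1 : ℕ) < r q.2 then ((m * r q.2 : ℕ) : ℂ)⁻¹ else 0, fun q => ?_,
    fun i => ?_, ?_⟩
  · dsimp only
    split_ifs <;> positivity
  · have hm : (m : ℂ) ≠ 0 := Nat.cast_ne_zero.mpr i.pos.ne'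
    have hri : (r i : ℂ) ≠ 0 := Nat.cast_ne_zero.mpr (hr i).1.ne'
    dsimp only
    rw [sum_ite, sum_const_zero, add_zero, sum_const, hcard, nsmul_eq_mul]
    field_simp
    push_cast
    ring
  · have hne (q : Fin n × Fin m) : ((m * r q.2 : ℕ) : ℂ)⁻¹ ≠ 0 :=
      inv_ne_zero (Nat.cast_ne_zero.mpr (Nat.mul_ne_zero q.2.pos.ne' (hr q.2).1.ne'))
    rw [Fintype.card_subtype, ← hsum]
    simp only [ne_eq, ite_eq_right_iff, hne, imp_false, not_not]
    rw [card_filter, Fintype.sum_prod_type_right]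
    exact sum_congr rfl fun i _ => by rw [← hcard i, card_filter]

/-- for `n ≤ m` and every `m ≤ k ≤ m·n` there is a density operator on
`ℂ^n ⊗ ℂ^m` of rank `k` with margins `(1/n) I_n` and `(1/m) I_m`. -/
theorem exists_density_rank_between_m_and_mn (n m : ℕ) [NeZero n] [NeZero m]
    (hnm : n ≤ m) (k : ℕ) (hk₁ : m ≤ k) (hk₂ : k ≤ m * n) :
    ∃ ρ : Matrix (Fin n × Fin m) (Fin n × Fin m) ℂ,
      ρ.PosSemidef ∧ ρ.trace = 1 ∧ ρ.rank = k ∧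
      trB ρ = ((n : ℂ))⁻¹ • (1 : Matrix (Fin n) (Fin n) ℂ) ∧
      trA ρ = ((m : ℂ))⁻¹ • (1 : Matrix (Fin m) (Fin m) ℂ) := by
  obtain ⟨w, hw_nonneg, hw_col, hw_card⟩ := exists_nonneg_weights_card_support_eq hk₁ hk₂
  have hU := conjTranspose_weylBasis_mul_self (m := m) hnm
  have hw_sum : ∑ q, w q = 1 := by
    rw [Fintype.sum_prod_type_right]
    simp [hw_col, NeZero.ne]
  refine ⟨weylMixture n m w, ?_, ?_, ?_, ?_, trA_weylMixture hnm hw_col⟩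
  · exact (posSemidef_diagonal_iff.mpr hw_nonneg).mul_mul_conjTranspose_same _
  · rw [weylMixture, trace_mul_diagonal_mul_conjTranspose hU, hw_sum]
  · rw [weylMixture, rank_mul_diagonal_mul_conjTranspose hU, hw_card]
  · rw [trB_weylMixture hnm, hw_sum, one_smul]
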